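/- arXiv:2510.04596 — 4 statements merged into one kernel-verified Lean document; each statement's English description precedes it below -/
import Mathlib

section
/- For density matrices ρ and σ on a finite-dimensional Hilbert space, and an arbitrary operator W, the fidelity satisfies F(ρ, W σ W†) ≥ F(W† ρ W, σ), where F(ρ,σ) = Tr√(√ρ σ √ρ). -/
/-!
Both sides are equal. Writing `|X| = √(X* X)`, one has `F(ρ, σ) = Tr |X|` whenever
`X X* = √ρ σ √ρ`, and `Tr |X| = Tr |X*|` because `X* X` and `X X*` have the same
characteristic polynomial, hence the same eigenvalues. With `A = W* ρ W`, both
`√A √σ` and `√ρ W √σ` have `√σ A √σ` as their `X* X`, so both fidelities equal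
`Tr |√ρ W √σ|`.
-/

open Matrix ComplexOrder
open scoped ComplexOrder

noncomputable section
open Classical in

/-- Square root of a matrix: the positive semidefinite square root if the matrix is
positive semidefinite, and `0` otherwise. -/
def msqrt {n : Type*} [Fintype n] [DecidableEq n] (A : Matrix n n ℂ) : Matrix n n ℂ :=
  if h : A.PosSemidef then
    h.1.eigenvectorUnitary.1 * diagonal ((↑) ∘ Real.sqrt ∘ h.1.eigenvalues) *
      (star h.1.eigenvectorUnitary : Matrix n n ℂ) else 0

/-- Fidelity of two positive semidefinite operators: `F(ρ,σ) = Tr √(√ρ σ √ρ)`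
(real part of the trace). -/
def fidelity {n : Type*} [Fintype n] [DecidableEq n] (ρ σ : Matrix n n ℂ) : ℝ :=
  ((msqrt (msqrt ρ * σ * msqrt ρ)).trace).re


open scoped MatrixOrder

namespace Matrix

variable {𝕜 n : Type*} [RCLike 𝕜] [Fintype n] [DecidableEq n]

lemma IsHermitian.trace_cfc {A : Matrix n n 𝕜} (hA : A.IsHermitian) (f : ℝ → ℝ) :
    (cfc f A).trace = ∑ i, (f (hA.eigenvalues i) : 𝕜) := by
  rw [hA.cfc_eq, IsHermitian.cfc, Unitary.conjStarAlgAut_apply, trace_mul_cycle,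
    Unitary.coe_star_mul_self, one_mul, trace_diagonal]
  rfl

lemma IsHermitian.trace_cfc_eq_of_charpoly_eq {A B : Matrix n n 𝕜} (hA : A.IsHermitian)
    (hB : B.IsHermitian) (h : A.charpoly = B.charpoly) (f : ℝ → ℝ) :
    (cfc f A).trace = (cfc f B).trace := by
  rw [hA.trace_cfc, hB.trace_cfc, (hA.eigenvalues_eq_eigenvalues_iff hB).mpr h]

lemma trace_abs_star (X : Matrix n n 𝕜) : (CFC.abs (star X)).trace = (CFC.abs X).trace := by
  rw [CFC.abs, CFC.abs, star_star, CFC.sqrt_eq_real_sqrt (X * star X),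
    CFC.sqrt_eq_real_sqrt (star X * X), cfcₙ_eq_cfc, cfcₙ_eq_cfc]
  exact (isHermitian_mul_conjTranspose_self X).trace_cfc_eq_of_charpoly_eq
    (isHermitian_conjTranspose_mul_self X) (charpoly_mul_comm _ _) _

end Matrix

section

variable {n : Type*} [Fintype n] [DecidableEq n]

lemma msqrt_eq_sqrt {A : Matrix n n ℂ} (hA : A.PosSemidef) : msqrt A = CFC.sqrt A := by
  rw [msqrt, dif_pos hA, CFC.sqrt_eq_real_sqrt A (nonneg_iff_posSemidef.mpr hA), cfcₙ_eq_cfc,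
    hA.1.cfc_eq, IsHermitian.cfc, Unitary.conjStarAlgAut_apply]
  rfl

lemma fidelity_eq_re_trace_abs {ρ σ X : Matrix n n ℂ} (hρ : ρ.PosSemidef)
    (hX : X * star X = CFC.sqrt ρ * σ * CFC.sqrt ρ) :
    fidelity ρ σ = (CFC.abs X).trace.re := by
  rw [← trace_abs_star, fidelity, msqrt_eq_sqrt hρ, ← hX, CFC.abs, star_star,
    msqrt_eq_sqrt (A := X * star X) (posSemidef_self_mul_conjTranspose X)]

lemma fidelity_conjTranspose_mul_mul {ρ σ : Matrix n n ℂ} (hρ : ρ.PosSemidef)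
    (hσ : σ.PosSemidef) (W : Matrix n n ℂ) :
    fidelity (Wᴴ * ρ * W) σ = fidelity ρ (W * σ * Wᴴ) := by
  have hA : (Wᴴ * ρ * W).PosSemidef := hρ.conjTranspose_mul_mul_same W
  set sA := CFC.sqrt (Wᴴ * ρ * W)
  set sρ := CFC.sqrt ρ
  set sσ := CFC.sqrt σ
  have hsA : star sA = sA := (CFC.sqrt_nonneg _).isSelfAdjoint.star_eq
  have hsρ : star sρ = sρ := (CFC.sqrt_nonneg _).isSelfAdjoint.star_eq
  have hsσ : star sσ = sσ := (CFC.sqrt_nonneg _).isSelfAdjoint.star_eq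
  have hsA_sq : sA * sA = Wᴴ * ρ * W := CFC.sqrt_mul_sqrt_self _ (nonneg_iff_posSemidef.mpr hA)
  have hsρ_sq : sρ * sρ = ρ := CFC.sqrt_mul_sqrt_self _ (nonneg_iff_posSemidef.mpr hρ)
  have hsσ_sq : sσ * sσ = σ := CFC.sqrt_mul_sqrt_self _ (nonneg_iff_posSemidef.mpr hσ)
  have hleft : sA * sσ * star (sA * sσ) = sA * σ * sA := by
    rw [star_mul, hsA, hsσ, mul_assoc sA, ← mul_assoc sσ, hsσ_sq, mul_assoc]
  have hmid : star (sA * sσ) * (sA * sσ) = star (sρ * W * sσ) * (sρ * W * sσ) := by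
    rw [star_mul, star_mul, star_mul, hsA, hsρ, hsσ, star_eq_conjTranspose W]
    calc sσ * sA * (sA * sσ) = sσ * (sA * sA) * sσ := by simp only [mul_assoc]
      _ = sσ * (Wᴴ * (sρ * sρ) * W) * sσ := by rw [hsA_sq, hsρ_sq]
      _ = _ := by simp only [mul_assoc]
  have hright : sρ * W * sσ * star (sρ * W * sσ) = sρ * (W * σ * Wᴴ) * sρ := by
    rw [star_mul, star_mul, hsρ, hsσ, star_eq_conjTranspose W, ← hsσ_sq]
    simp only [mul_assoc]
  calc fidelity (Wᴴ * ρ * W) σ = (CFC.abs (sA * sσ)).trace.re :=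
        fidelity_eq_re_trace_abs hA hleft
    _ = (CFC.abs (sρ * W * sσ)).trace.re := by rw [CFC.abs, CFC.abs, hmid]
    _ = fidelity ρ (W * σ * Wᴴ) := (fidelity_eq_re_trace_abs hρ hright).symm

end

/-- For positive semidefinite operators `ρ`, `σ` on a
finite-dimensional Hilbert space and an arbitrary operator `W`,
`F(ρ, W σ W†) ≥ F(W† ρ W, σ)`. -/
theorem fidelity_conj_ge {n : Type*} [Fintype n] [DecidableEq n]
    (ρ σ : Matrix n n ℂ) (hρ : ρ.PosSemidef) (hσ : σ.PosSemidef) (W : Matrix n n ℂ) :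
    fidelity (Wᴴ * ρ * W) σ ≤ fidelity ρ (W * σ * Wᴴ) :=
  (fidelity_conjTranspose_mul_mul hρ hσ W).le

end
end

section
/- For a pure state |ψ⟩ on A_1 ⊗ ⋯ ⊗ A_n ⊗ A_{n+1} with A_{n+1} = R_1 ⊗ ⋯ ⊗ R_n, the telescoping identity Σ_{i=1}^n I(R_i : Ā_i R̄_i | A_i) = Σ_{i=1}^n [S(A_iR_i) − S(A_i)] + S(A_1⋯A_n) holds, where Ā_i = ⊗_{j≠i} A_j and R̄_i = ⊗_{j>i} R_j. -/
/-- Telescoping identity for conditional mutual information of a pure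
state.  Subsystems of the `(n+1)`-partite system `A_1 ⊗ ⋯ ⊗ A_n ⊗ (R_1 ⊗ ⋯ ⊗ R_n)` are
encoded as finite sets of parties `Fin n ⊕ Fin n` (`inl i ↦ A_i`, `inr i ↦ R_i`), `S` is
the entropy function of marginals, purity means `S(total) = 0`, and
`I(X:Y|Z) = S(X∪Z) + S(Y∪Z) − S(X∪Y∪Z) − S(Z)`.  Then
`Σ_i I(R_i : Ā_i R̄_i | A_i) = Σ_i [S(A_iR_i) − S(A_i)] + S(A_1⋯A_n)`. -/
theorem telescoping_cmi (n : ℕ)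
    (S : Finset (Fin n ⊕ Fin n) → ℝ)
    (hpure : S Finset.univ = 0)
    (I : Finset (Fin n ⊕ Fin n) → Finset (Fin n ⊕ Fin n) → Finset (Fin n ⊕ Fin n) → ℝ)
    (hI : ∀ X Y Z, I X Y Z = S (X ∪ Z) + S (Y ∪ Z) - S (X ∪ Y ∪ Z) - S Z) :
    ∑ i : Fin n,
        I {Sum.inr i}
          (((Finset.univ.erase i).image Sum.inl) ∪
            ((Finset.univ.filter (fun j => i < j)).image Sum.inr))
          {Sum.inl i}
      = ∑ i : Fin n, (S {Sum.inl i, Sum.inr i} - S {Sum.inl i})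
          + S (Finset.univ.image Sum.inl) := by
  set f : ℕ → ℝ := fun k =>
    S ((Finset.univ : Finset (Fin n)).image Sum.inl ∪
      ((Finset.univ.filter (fun j : Fin n => k ≤ j.val)).image Sum.inr)) with hf
  have key : ∀ i : Fin n,
      I {Sum.inr i}
        (((Finset.univ.erase i).image Sum.inl) ∪
          ((Finset.univ.filter (fun j => i < j)).image Sum.inr))
        {Sum.inl i}
      = (S {Sum.inl i, Sum.inr i} - S {Sum.inl i}) + (f (i.val + 1) - f i.val) := by
    intro i
    rw [hI]
    have h1 : ({Sum.inr i} : Finset (Fin n ⊕ Fin n)) ∪ {Sum.inl i}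
        = {Sum.inl i, Sum.inr i} := by
      ext x; simp [or_comm]
    have h2 : (((Finset.univ.erase i).image Sum.inl) ∪
          ((Finset.univ.filter (fun j => i < j)).image Sum.inr)) ∪ {Sum.inl i}
        = (Finset.univ : Finset (Fin n)).image Sum.inl ∪
          ((Finset.univ.filter (fun j : Fin n => i.val + 1 ≤ j.val)).image Sum.inr) := by
      ext x
      cases x with
      | inl a =>
        simp only [Finset.mem_union, Finset.mem_image, Finset.mem_singleton, Finset.mem_filter,
          Finset.mem_erase, Finset.mem_univ, Sum.inl.injEq, true_and, and_true,
          reduceCtorEq, exists_false, or_false, false_or, exists_eq_right, ne_eq]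
        tauto
      | inr a =>
        simp only [Finset.mem_union, Finset.mem_image, Finset.mem_singleton, Finset.mem_filter,
          Finset.mem_erase, Finset.mem_univ, Sum.inr.injEq, true_and, and_true,
          reduceCtorEq, exists_false, or_false, false_or, exists_eq_right, ne_eq,
          and_false]
        omega
    have h3 : ({Sum.inr i} ∪ (((Finset.univ.erase i).image Sum.inl) ∪
          ((Finset.univ.filter (fun j => i < j)).image Sum.inr))) ∪ {Sum.inl i}
        = (Finset.univ : Finset (Fin n)).image Sum.inl ∪
          ((Finset.univ.filter (fun j : Fin n => i.val ≤ j.val)).image Sum.inr) := by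
      ext x
      cases x with
      | inl a =>
        simp only [Finset.mem_union, Finset.mem_image, Finset.mem_singleton, Finset.mem_filter,
          Finset.mem_erase, Finset.mem_univ, Sum.inl.injEq, true_and, and_true,
          reduceCtorEq, exists_false, or_false, false_or, exists_eq_right, ne_eq,
          and_false]
        tauto
      | inr a =>
        simp only [Finset.mem_union, Finset.mem_image, Finset.mem_singleton, Finset.mem_filter,
          Finset.mem_erase, Finset.mem_univ, Sum.inr.injEq, true_and, and_true,
          reduceCtorEq, exists_false, or_false, false_or, exists_eq_right, ne_eq,
          and_false]
        omega
    rw [h1, h2, h3, hf]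
    ring
  rw [Finset.sum_congr rfl (fun i _ => key i), Finset.sum_add_distrib]
  congr 1
  have htel : ∑ i : Fin n, (f (i.val + 1) - f i.val) = f n - f 0 := by
    rw [Fin.sum_univ_eq_sum_range (fun k => f (k + 1) - f k), Finset.sum_range_sub]
  rw [htel]
  have hfn : f n = S ((Finset.univ : Finset (Fin n)).image Sum.inl) := by
    rw [hf]
    have h : (Finset.univ.filter (fun j : Fin n => n ≤ j.val)) = ∅ := by
      ext j; simp [Nat.not_le.mpr j.isLt]
    simp only [h, Finset.image_empty, Finset.union_empty]
  have hf0 : f 0 = 0 := by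
    rw [hf]
    have h : ((Finset.univ : Finset (Fin n)).image Sum.inl ∪
        ((Finset.univ.filter (fun j : Fin n => 0 ≤ j.val)).image Sum.inr))
        = Finset.univ := by
      ext x; cases x <;> simp
    simp only [h, hpure]
  rw [hfn, hf0, sub_zero]
end

section
/- The generalized entanglement of purification is monotone under discarding subsystems: if A_i' = A_i ⊗ E_i for each i, then E_p(A_1,…,A_n) ≤ E_p(A_1',…,A_n'). -/
open Matrix ComplexOrder
open scoped ComplexOrder

noncomputable section
open Classical

variable {ι : Type*} [Fintype ι] [DecidableEq ι]
variable {d : ι → Type*} [∀ i, Fintype (d i)] [∀ i, DecidableEq (d i)]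

/-- Merge an assignment on the parties in `T` with one on the parties outside `T`. -/
def merge (T : Finset ι) (d : ι → Type*) (a : ∀ i : {j // j ∈ T}, d i.1)
    (b : ∀ i : {j // j ∉ T}, d i.1) : ∀ i, d i :=
  fun i => if h : i ∈ T then a ⟨i, h⟩ else b ⟨i, h⟩

/-- The marginal (partial trace) of a multipartite operator on the set `T` of parties. -/
def marg (T : Finset ι) (ρ : Matrix (∀ i, d i) (∀ i, d i) ℂ) :
    Matrix (∀ i : {j // j ∈ T}, d i.1) (∀ i : {j // j ∈ T}, d i.1) ℂ :=
  fun a b => ∑ f : ∀ i : {j // j ∉ T}, d i.1, ρ (merge T d a f) (merge T d b f)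

/-- Von Neumann entropy of a (hermitian) matrix via its eigenvalues,
`S(ρ) = −Σ λ_i log λ_i`. -/
def vN {m : Type*} [Fintype m] [DecidableEq m] (A : Matrix m m ℂ) : ℝ :=
  if h : A.IsHermitian then ∑ i, Real.negMulLog (h.eigenvalues i) else 0

/-- Matrix logarithm of a hermitian matrix via the spectral decomposition. -/
def mlog {m : Type*} [Fintype m] [DecidableEq m] (A : Matrix m m ℂ) : Matrix m m ℂ :=
  if h : A.IsHermitian then
    (h.eigenvectorUnitary : Matrix m m ℂ) *
      Matrix.diagonal (fun i => (Real.log (h.eigenvalues i) : ℂ)) *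
      (star h.eigenvectorUnitary : Matrix m m ℂ)
  else 0

/-- Quantum relative entropy `D(ρ‖σ) = Tr ρ (log ρ − log σ)`. -/
def relEnt {m : Type*} [Fintype m] [DecidableEq m] (ρ σ : Matrix m m ℂ) : ℝ :=
  ((ρ * (mlog ρ - mlog σ)).trace).re


/-- `ψ` (a vector on `⊗_i (A_i ⊗ R_i)`) is a purification of the `n`-partite state `ρ`
on `⊗_i A_i`, with purifying registers `R_i` attached to the respective parties. -/
def IsPurification (ι : Type*) [Fintype ι] [DecidableEq ι] (d R : ι → Type*)
    [∀ i, Fintype (d i)] [∀ i, DecidableEq (d i)]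
    [∀ i, Fintype (R i)] [∀ i, DecidableEq (R i)]
    (ρ : Matrix (∀ i, d i) (∀ i, d i) ℂ) (ψ : (∀ i, d i × R i) → ℂ) : Prop :=
  (∑ f, Complex.normSq (ψ f) = 1) ∧
    ∀ a b, (∑ e : ∀ i, R i,
        ψ (fun i => (a i, e i)) * (starRingEnd ℂ) (ψ (fun i => (b i, e i)))) = ρ a b

/-- The value `Σ_i S(A_i R_i)` for a given purification. -/
def EpTerm (ι : Type*) [Fintype ι] [DecidableEq ι] (d R : ι → Type*)
    [∀ i, Fintype (d i)] [∀ i, DecidableEq (d i)]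
    [∀ i, Fintype (R i)] [∀ i, DecidableEq (R i)]
    (ψ : (∀ i, d i × R i) → ℂ) : ℝ :=
  ∑ i : ι, vN (marg {i} (fun f g => ψ f * (starRingEnd ℂ) (ψ g)))

/-- Generalized entanglement of purification
`E_p(A_1,…,A_n) = (1/2) inf Σ_i S(A_iR_i)`, the infimum running over all purifications
and all partitions of the purifying system into registers `R_1,…,R_n`. -/
def Ep (ι : Type*) [Fintype ι] [DecidableEq ι] (d : ι → Type)
    [∀ i, Fintype (d i)] [∀ i, DecidableEq (d i)]
    (ρ : Matrix (∀ i, d i) (∀ i, d i) ℂ) : ℝ :=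
  (1 / 2) * sInf { x | ∃ (R : ι → Type) (fR : ∀ i, Fintype (R i))
    (dR : ∀ i, DecidableEq (R i)) (ψ : (∀ i, d i × R i) → ℂ),
      @IsPurification ι _ _ d R _ _ fR dR ρ ψ ∧ x = @EpTerm ι _ _ d R _ _ fR dR ψ }

/-! If `ψ` purifies `ρ'` with registers `Rᵢ`, then regrouping each factor `(Aᵢ ⊗ Eᵢ) ⊗ Rᵢ` as
`Aᵢ ⊗ (Eᵢ ⊗ Rᵢ)` makes the same vector a purification of the marginal `ρ` with registers
`Eᵢ ⊗ Rᵢ`. Each local system `A'ᵢRᵢ` is the system `Aᵢ(EᵢRᵢ)` relabelled, so every value of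
`Σᵢ S(AᵢRᵢ)` available for `ρ'` is available for `ρ`, and the infimum for `ρ` can only be smaller.
Comparing the infima needs the values for `ρ'` to exist (writing `ρ' = B†B`, the vector
`ψ(a, e) = B†(a, e)` purifies `ρ'`) and the values for `ρ` to be bounded below (entropies of
states are nonnegative). -/

section Entropy

variable {m n : Type*} [Fintype m] [DecidableEq m] [Fintype n] [DecidableEq n]

theorem vN_eq_sum_roots_charpoly {A : Matrix m m ℂ} (hA : A.IsHermitian) :
    vN A = (A.charpoly.roots.map fun z => Real.negMulLog z.re).sum := by
  rw [vN, dif_pos hA, hA.roots_charpoly_eq_eigenvalues, Multiset.map_map]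
  simp [Function.comp_def]

theorem vN_submatrix_equiv (e : m ≃ n) (A : Matrix n n ℂ) : vN (A.submatrix e e) = vN A := by
  by_cases hA : A.IsHermitian
  · rw [vN_eq_sum_roots_charpoly hA, vN_eq_sum_roots_charpoly (hA.submatrix e),
      show (A.submatrix e e).charpoly = A.charpoly from charpoly_reindex e.symm A]
  · rw [vN, vN, dif_neg hA, dif_neg (mt (isHermitian_submatrix_equiv e).mp hA)]

theorem vN_nonneg {A : Matrix m m ℂ} (hA : A.PosSemidef) (htr : A.trace = 1) : 0 ≤ vN A := by
  have hsum : ∑ i, hA.isHermitian.eigenvalues i = 1 := by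
    have h := hA.isHermitian.trace_eq_sum_eigenvalues.symm.trans htr
    rw [← map_sum] at h
    exact Complex.ofReal_inj.mp h
  rw [vN, dif_pos hA.isHermitian]
  refine Finset.sum_nonneg fun i _ => Real.negMulLog_nonneg (hA.eigenvalues_nonneg i) ?_
  exact hsum ▸ Finset.single_le_sum (fun j _ => hA.eigenvalues_nonneg j) (Finset.mem_univ i)

end Entropy

theorem trace_vecMulVec_star {m : Type*} [Fintype m] (ψ : m → ℂ) :
    (vecMulVec ψ (star ψ)).trace = ∑ f, Complex.normSq (ψ f) := by
  rw [trace_vecMulVec, Complex.ofReal_sum]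
  exact Finset.sum_congr rfl fun f _ => Complex.mul_conj (ψ f)

section Marginal

variable {ι : Type*} [DecidableEq ι] {d d' : ι → Type*}

theorem merge_piCongrRight (e : ∀ i, d' i ≃ d i) (T : Finset ι)
    (a : ∀ i : {j // j ∈ T}, d' i.1) (f : ∀ i : {j // j ∉ T}, d' i.1) :
    merge T d (Equiv.piCongrRight (fun j : {j // j ∈ T} => e j) a)
        (Equiv.piCongrRight (fun j : {j // j ∉ T} => e j) f) =
      Equiv.piCongrRight e (merge T d' a f) := by
  funext i
  by_cases hi : i ∈ T <;> simp [merge, hi]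

variable [Fintype ι] [∀ i, Fintype (d i)] [∀ i, Fintype (d' i)]

theorem marg_submatrix_piCongrRight (e : ∀ i, d' i ≃ d i) (T : Finset ι)
    (A : Matrix (∀ i, d i) (∀ i, d i) ℂ) :
    marg T (A.submatrix (Equiv.piCongrRight e) (Equiv.piCongrRight e)) =
      (marg T A).submatrix (Equiv.piCongrRight fun j : {j // j ∈ T} => e j)
        (Equiv.piCongrRight fun j : {j // j ∈ T} => e j) := by
  ext a b
  simp only [marg, submatrix_apply, ← merge_piCongrRight]
  exact Fintype.sum_equiv (Equiv.piCongrRight fun j : {j // j ∉ T} => e j) _ _ fun f => rfl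

theorem trace_marg (T : Finset ι) (A : Matrix (∀ i, d i) (∀ i, d i) ℂ) :
    (marg T A).trace = A.trace := by
  simp only [trace, diag, marg, ← Fintype.sum_prod_type']
  exact Fintype.sum_equiv (Equiv.piEquivPiSubtypeProd (· ∈ T) d).symm _ _ fun _ => rfl

theorem marg_vecMulVec_star_eq_mul_conjTranspose (T : Finset ι) (ψ : (∀ i, d i) → ℂ) :
    marg T (vecMulVec ψ (star ψ)) =
      of (fun a f => ψ (merge T d a f)) * (of fun a f => ψ (merge T d a f))ᴴ := by
  ext a b
  simp [marg, mul_apply, vecMulVec_apply]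

theorem marg_vecMulVec_star_posSemidef (T : Finset ι) (ψ : (∀ i, d i) → ℂ) :
    (marg T (vecMulVec ψ (star ψ))).PosSemidef := by
  rw [marg_vecMulVec_star_eq_mul_conjTranspose]
  exact posSemidef_self_mul_conjTranspose _

end Marginal

section Purification

variable {ι : Type*} [Fintype ι] [DecidableEq ι] {d R : ι → Type*}
  [∀ i, Fintype (d i)] [∀ i, DecidableEq (d i)] [∀ i, Fintype (R i)] [∀ i, DecidableEq (R i)]

theorem EpTerm_eq_sum_vN_marg (ψ : (∀ i, d i × R i) → ℂ) :
    EpTerm ι d R ψ = ∑ i, vN (marg {i} (vecMulVec ψ (star ψ))) := rfl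

theorem EpTerm_nonneg {ψ : (∀ i, d i × R i) → ℂ} (hψ : ∑ f, Complex.normSq (ψ f) = 1) :
    0 ≤ EpTerm ι d R ψ := by
  rw [EpTerm_eq_sum_vN_marg]
  exact Finset.sum_nonneg fun _ _ => vN_nonneg (marg_vecMulVec_star_posSemidef _ ψ)
    (by rw [trace_marg, trace_vecMulVec_star, hψ, Complex.ofReal_one])

theorem EpTerm_comp_piCongrRight {d' R' : ι → Type*} [∀ i, Fintype (d' i)]
    [∀ i, DecidableEq (d' i)] [∀ i, Fintype (R' i)] [∀ i, DecidableEq (R' i)]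
    (e : ∀ i, d' i × R' i ≃ d i × R i) (ψ : (∀ i, d i × R i) → ℂ) :
    EpTerm ι d' R' (ψ ∘ Equiv.piCongrRight e) = EpTerm ι d R ψ := by
  simp only [EpTerm_eq_sum_vN_marg]
  refine Finset.sum_congr rfl fun i _ => ?_
  rw [← vN_submatrix_equiv (Equiv.piCongrRight fun j : {j // j ∈ ({i} : Finset ι)} => e j),
    ← marg_submatrix_piCongrRight]
  rfl

theorem isPurification_of_trace_eq_one {ρ : Matrix (∀ i, d i) (∀ i, d i) ℂ}
    {ψ : (∀ i, d i × R i) → ℂ} (htr : ρ.trace = 1)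
    (hρ : ∀ a b, ∑ e : ∀ i, R i,
      ψ (fun i => (a i, e i)) * (starRingEnd ℂ) (ψ (fun i => (b i, e i))) = ρ a b) :
    IsPurification ι d R ρ ψ := by
  refine ⟨Complex.ofReal_injective ?_, hρ⟩
  rw [Complex.ofReal_one, ← htr, ← trace_vecMulVec_star]
  simp only [trace, diag, ← hρ, ← Fintype.sum_prod_type']
  exact (Fintype.sum_equiv (Equiv.arrowProdEquivProdArrow ι d R) _ _ fun _ => rfl)

open scoped MatrixOrder in
theorem exists_isPurification {ρ : Matrix (∀ i, d i) (∀ i, d i) ℂ} (hρ : ρ.PosSemidef)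
    (htr : ρ.trace = 1) : ∃ ψ : (∀ i, d i × d i) → ℂ, IsPurification ι d d ρ ψ := by
  obtain ⟨B, rfl⟩ := CStarAlgebra.nonneg_iff_eq_star_mul_self.mp hρ.nonneg
  refine ⟨fun f => Bᴴ (fun i => (f i).1) (fun i => (f i).2),
    isPurification_of_trace_eq_one htr fun a b => ?_⟩
  simp [mul_apply, conjTranspose_apply]

theorem IsPurification.discard {E : ι → Type*} [∀ i, Fintype (E i)] [∀ i, DecidableEq (E i)]
    {ρ' : Matrix (∀ i, d i × E i) (∀ i, d i × E i) ℂ} {ψ : (∀ i, (d i × E i) × R i) → ℂ}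
    (hψ : IsPurification ι (fun i => d i × E i) R ρ' ψ) :
    IsPurification ι d (fun i => E i × R i)
      (fun a b => ∑ e : ∀ i, E i, ρ' (fun i => (a i, e i)) (fun i => (b i, e i)))
      (ψ ∘ Equiv.piCongrRight fun i => (Equiv.prodAssoc (d i) (E i) (R i)).symm) := by
  refine ⟨(Fintype.sum_equiv (Equiv.piCongrRight _) _ _ fun _ => rfl).trans hψ.1, fun a b => ?_⟩
  calc _ = ∑ p : (∀ i, E i) × (∀ i, R i), ψ (fun i => ((a i, p.1 i), p.2 i)) *
          (starRingEnd ℂ) (ψ (fun i => ((b i, p.1 i), p.2 i))) :=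
        Fintype.sum_equiv (Equiv.arrowProdEquivProdArrow ι E R) _ _ fun _ => rfl
    _ = _ := by
        rw [Fintype.sum_prod_type]
        exact Finset.sum_congr rfl fun e _ => hψ.2 (fun i => (a i, e i)) (fun i => (b i, e i))

end Purification

section PurificationValues

variable {ι : Type*} [Fintype ι] [DecidableEq ι] {d : ι → Type}
  [∀ i, Fintype (d i)] [∀ i, DecidableEq (d i)]

def purificationValues (ρ : Matrix (∀ i, d i) (∀ i, d i) ℂ) : Set ℝ :=
  { x | ∃ (R : ι → Type) (fR : ∀ i, Fintype (R i))
    (dR : ∀ i, DecidableEq (R i)) (ψ : (∀ i, d i × R i) → ℂ),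
      @IsPurification ι _ _ d R _ _ fR dR ρ ψ ∧ x = @EpTerm ι _ _ d R _ _ fR dR ψ }

theorem bddBelow_purificationValues (ρ : Matrix (∀ i, d i) (∀ i, d i) ℂ) :
    BddBelow (purificationValues ρ) := by
  refine ⟨0, ?_⟩
  rintro _ ⟨R, _, _, ψ, hψ, rfl⟩
  exact EpTerm_nonneg hψ.1

theorem purificationValues_nonempty {ρ : Matrix (∀ i, d i) (∀ i, d i) ℂ} (hρ : ρ.PosSemidef)
    (htr : ρ.trace = 1) : (purificationValues ρ).Nonempty := by
  obtain ⟨ψ, hψ⟩ := exists_isPurification hρ htr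
  exact ⟨_, _, _, _, ψ, hψ, rfl⟩

theorem Ep_le_Ep_of_purificationValues_subset {d' : ι → Type} [∀ i, Fintype (d' i)]
    [∀ i, DecidableEq (d' i)] {ρ : Matrix (∀ i, d i) (∀ i, d i) ℂ}
    {ρ' : Matrix (∀ i, d' i) (∀ i, d' i) ℂ} (hne : (purificationValues ρ').Nonempty)
    (hsub : purificationValues ρ' ⊆ purificationValues ρ) : Ep ι d ρ ≤ Ep ι d' ρ' :=
  mul_le_mul_of_nonneg_left (csInf_le_csInf (bddBelow_purificationValues ρ) hne hsub)
    (by norm_num)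

theorem purificationValues_subset_discard {E : ι → Type} [∀ i, Fintype (E i)]
    [∀ i, DecidableEq (E i)] (ρ' : Matrix (∀ i, d i × E i) (∀ i, d i × E i) ℂ) :
    purificationValues ρ' ⊆
      purificationValues
        (fun a b => ∑ e : ∀ i, E i, ρ' (fun i => (a i, e i)) (fun i => (b i, e i))) := by
  rintro _ ⟨R, _, _, ψ, hψ, rfl⟩
  exact ⟨_, _, _, _, hψ.discard, (EpTerm_comp_piCongrRight _ ψ).symm⟩

end PurificationValues

/-- The generalized entanglement of purification is monotone under
discarding subsystems: if `A_i' = A_i ⊗ E_i` for each `i`, then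
`E_p(A_1,…,A_n) ≤ E_p(A_1',…,A_n')`, where the state on `⊗_i A_i` is the marginal
(partial trace over `⊗_i E_i`) of the state on `⊗_i A_i'`. -/
theorem Ep_mono_discard (ι : Type) [Fintype ι] [DecidableEq ι]
    (d E : ι → Type) [∀ i, Fintype (d i)] [∀ i, DecidableEq (d i)]
    [∀ i, Fintype (E i)] [∀ i, DecidableEq (E i)]
    (ρ' : Matrix (∀ i, d i × E i) (∀ i, d i × E i) ℂ)
    (hρ' : ρ'.PosSemidef) (htr : ρ'.trace = 1) :
    Ep ι d (fun a b => ∑ e : ∀ i, E i, ρ' (fun i => (a i, e i)) (fun i => (b i, e i)))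
      ≤ Ep ι (fun i => d i × E i) ρ' :=
  Ep_le_Ep_of_purificationValues_subset (purificationValues_nonempty hρ' htr)
    (purificationValues_subset_discard ρ')

end
end

section
/- For tripartite pure stabilizer states (locally equivalent to a tensor product of e_{AB}, e_{BC}, e_{AC} Bell pairs, g_{ABC} GHZ states, and unentangled qubits), the average number of Bell pairs between A and B satisfies ē_{AB} log 2 = (1/2)(S̄_A + S̄_B − S̄_C − ḡ(A:B)) ≥ 0, and if S̄_X ≥ log D_{X,min} − D_{X,min}/D_{X,max} for each marginal with N_C/N > 1/2, then ḡ(A:B) ≤ D_{AB}/D_C and ē_{AB} ≤ D_{AB}/D_C. -/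
/-
Averaging the pointwise identities `S_A = (e_AB + e_AC + g_ABC) log 2` (and cyclically) is linear,
which gives the identity for `ē_AB`. For the bounds, `S̄_A ≤ N_A log 2` and `S̄_B ≤ N_B log 2`
trivially, while `D_C > D_AB` makes the hypothesis on `S̄_C` read `S̄_C ≥ log D_AB − D_AB/D_C`.
Hence `(2 ē_AB + ḡ_ABC) log 2 = S̄_A + S̄_B − S̄_C ≤ D_AB/D_C`, and `2 log 2 > 1`.
-/

open MeasureTheory

section

variable {Ω : Type*} [MeasurableSpace Ω] {μ : Measure Ω}

lemma integrable_natCast_of_le [IsFiniteMeasure μ] {f : Ω → ℕ} (hf : Measurable f) {C : ℕ}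
    (hC : ∀ ω, f ω ≤ C) : Integrable (fun ω => (f ω : ℝ)) μ :=
  .of_bound (by fun_prop) C (.of_forall fun ω => by simpa using hC ω)

lemma integral_natCast_add_add {f g h : Ω → ℕ} (hf : Integrable (fun ω => (f ω : ℝ)) μ)
    (hg : Integrable (fun ω => (g ω : ℝ)) μ) (hh : Integrable (fun ω => (h ω : ℝ)) μ) :
    ∫ ω, ((f ω + g ω + h ω : ℕ) : ℝ) ∂μ
      = (∫ ω, (f ω : ℝ) ∂μ) + (∫ ω, (g ω : ℝ) ∂μ) + ∫ ω, (h ω : ℝ) ∂μ := by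
  simp only [Nat.cast_add]
  rw [integral_add (f := fun ω => (f ω : ℝ) + g ω) (hf.add hg) hh, integral_add hf hg]

lemma integral_natCast_le [IsProbabilityMeasure μ] {f : Ω → ℕ} {C : ℕ} (hC : ∀ ω, f ω ≤ C) :
    ∫ ω, (f ω : ℝ) ∂μ ≤ C := by
  simpa using integral_mono_of_nonneg (.of_forall fun ω => Nat.cast_nonneg (f ω))
    (integrable_const (μ := μ) (C : ℝ)) (.of_forall fun ω => Nat.cast_le.mpr (hC ω))

lemma log_min_sub_min_div_max_pow {b : ℝ} (hb : 1 < b) {m n : ℕ} (h : m ≤ n) :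
    Real.log (min (b ^ n) (b ^ m)) - min (b ^ n) (b ^ m) / max (b ^ n) (b ^ m)
      = m * Real.log b - b ^ m / b ^ n := by
  have hle : b ^ m ≤ b ^ n := pow_le_pow_right₀ hb.le h
  rw [min_eq_right hle, max_eq_left hle, Real.log_pow]

end

theorem stabilizer_bell_pair_average_general {Ω : Type*} [MeasurableSpace Ω]
    (μ : Measure Ω) [IsProbabilityMeasure μ]
    (eAB eBC eAC gABC sA sB : Ω → ℕ)
    (hmAB : Measurable eAB) (hmBC : Measurable eBC) (hmAC : Measurable eAC)
    (hmg : Measurable gABC)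
    (NA NB NC : ℕ)
    (hA : ∀ ω, eAB ω + eAC ω + gABC ω + sA ω = NA)
    (hB : ∀ ω, eAB ω + eBC ω + gABC ω + sB ω = NB)
    (hNC : NA + NB < NC)
    (hSC : Real.log (min ((2:ℝ)^NC) ((2:ℝ)^(NA+NB)))
        - min ((2:ℝ)^NC) ((2:ℝ)^(NA+NB)) / max ((2:ℝ)^NC) ((2:ℝ)^(NA+NB))
      ≤ (∫ ω, ((eAC ω + eBC ω + gABC ω : ℕ) : ℝ) ∂μ) * Real.log 2) :
    ((∫ ω, (eAB ω : ℝ) ∂μ) * Real.log 2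
        = (1/2) * ((∫ ω, ((eAB ω + eAC ω + gABC ω : ℕ) : ℝ) ∂μ) * Real.log 2
            + (∫ ω, ((eAB ω + eBC ω + gABC ω : ℕ) : ℝ) ∂μ) * Real.log 2
            - (∫ ω, ((eAC ω + eBC ω + gABC ω : ℕ) : ℝ) ∂μ) * Real.log 2
            - (∫ ω, (gABC ω : ℝ) ∂μ) * Real.log 2)) ∧
      0 ≤ (∫ ω, (eAB ω : ℝ) ∂μ) * Real.log 2 ∧
      (∫ ω, (gABC ω : ℝ) ∂μ) * Real.log 2 ≤ (2:ℝ)^(NA+NB) / (2:ℝ)^NC ∧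
      (∫ ω, (eAB ω : ℝ) ∂μ) ≤ (2:ℝ)^(NA+NB) / (2:ℝ)^NC := by
  have hlog2 : 0 < Real.log 2 := Real.log_pos one_lt_two
  have iAB := integrable_natCast_of_le (μ := μ) hmAB fun ω => (hA ω ▸ by omega : eAB ω ≤ NA)
  have iAC := integrable_natCast_of_le (μ := μ) hmAC fun ω => (hA ω ▸ by omega : eAC ω ≤ NA)
  have iBC := integrable_natCast_of_le (μ := μ) hmBC fun ω => (hB ω ▸ by omega : eBC ω ≤ NB)
  have ig := integrable_natCast_of_le (μ := μ) hmg fun ω => (hA ω ▸ by omega : gABC ω ≤ NA)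
  have splitA := integral_natCast_add_add iAB iAC ig
  have splitB := integral_natCast_add_add iAB iBC ig
  have splitC := integral_natCast_add_add iAC iBC ig
  have hSA_le : ∫ ω, ((eAB ω + eAC ω + gABC ω : ℕ) : ℝ) ∂μ ≤ NA :=
    integral_natCast_le fun ω => hA ω ▸ Nat.le_add_right _ _
  have hSB_le : ∫ ω, ((eAB ω + eBC ω + gABC ω : ℕ) : ℝ) ∂μ ≤ NB :=
    integral_natCast_le fun ω => hB ω ▸ Nat.le_add_right _ _
  rw [log_min_sub_min_div_max_pow one_lt_two hNC.le, splitC, Nat.cast_add] at hSC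
  rw [splitA] at hSA_le
  rw [splitB] at hSB_le
  have hgap : (2 * (∫ ω, (eAB ω : ℝ) ∂μ) + ∫ ω, (gABC ω : ℝ) ∂μ) * Real.log 2
      ≤ (2:ℝ)^(NA+NB) / (2:ℝ)^NC := by
    have := mul_le_mul_of_nonneg_right hSA_le hlog2.le
    have := mul_le_mul_of_nonneg_right hSB_le hlog2.le
    linarith
  have heAB : 0 ≤ ∫ ω, (eAB ω : ℝ) ∂μ := integral_nonneg fun ω => Nat.cast_nonneg _
  have hg : 0 ≤ ∫ ω, (gABC ω : ℝ) ∂μ := integral_nonneg fun ω => Nat.cast_nonneg _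
  refine ⟨by rw [splitA, splitB, splitC]; ring, by positivity, by nlinarith, ?_⟩
  nlinarith [Real.log_two_gt_d9]

/-- For tripartite pure stabilizer states — locally equivalent to
`e_AB, e_BC, e_AC` Bell pairs, `g_ABC` GHZ states and unentangled qubits, so that
`S(A) = (e_AB + e_AC + g_ABC) log 2` (and cyclically) and `g(A:B) = g_ABC log 2` — the
ensemble averages satisfy `ē_AB log 2 = (1/2)(S̄_A + S̄_B − S̄_C − ḡ(A:B)) ≥ 0`, and if
moreover `S̄_X ≥ log D_{X,min} − D_{X,min}/D_{X,max}` for each marginal and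
`N_C/N > 1/2`, then `ḡ(A:B) ≤ D_{AB}/D_C` and `ē_AB ≤ D_{AB}/D_C`. -/
theorem stabilizer_bell_pair_average {Ω : Type*} [MeasurableSpace Ω]
    (μ : Measure Ω) [IsProbabilityMeasure μ]
    (eAB eBC eAC gABC sA sB sC : Ω → ℕ)
    (hmAB : Measurable eAB) (hmBC : Measurable eBC) (hmAC : Measurable eAC)
    (hmg : Measurable gABC)
    (NA NB NC : ℕ)
    (hA : ∀ ω, eAB ω + eAC ω + gABC ω + sA ω = NA)
    (hB : ∀ ω, eAB ω + eBC ω + gABC ω + sB ω = NB)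
    (hC : ∀ ω, eAC ω + eBC ω + gABC ω + sC ω = NC)
    (hNC : NA + NB < NC)
    (hSA : Real.log (min ((2:ℝ)^NA) ((2:ℝ)^(NB+NC)))
        - min ((2:ℝ)^NA) ((2:ℝ)^(NB+NC)) / max ((2:ℝ)^NA) ((2:ℝ)^(NB+NC))
      ≤ (∫ ω, ((eAB ω + eAC ω + gABC ω : ℕ) : ℝ) ∂μ) * Real.log 2)
    (hSB : Real.log (min ((2:ℝ)^NB) ((2:ℝ)^(NA+NC)))
        - min ((2:ℝ)^NB) ((2:ℝ)^(NA+NC)) / max ((2:ℝ)^NB) ((2:ℝ)^(NA+NC))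
      ≤ (∫ ω, ((eAB ω + eBC ω + gABC ω : ℕ) : ℝ) ∂μ) * Real.log 2)
    (hSC : Real.log (min ((2:ℝ)^NC) ((2:ℝ)^(NA+NB)))
        - min ((2:ℝ)^NC) ((2:ℝ)^(NA+NB)) / max ((2:ℝ)^NC) ((2:ℝ)^(NA+NB))
      ≤ (∫ ω, ((eAC ω + eBC ω + gABC ω : ℕ) : ℝ) ∂μ) * Real.log 2) :
    ((∫ ω, (eAB ω : ℝ) ∂μ) * Real.log 2
        = (1/2) * ((∫ ω, ((eAB ω + eAC ω + gABC ω : ℕ) : ℝ) ∂μ) * Real.log 2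
            + (∫ ω, ((eAB ω + eBC ω + gABC ω : ℕ) : ℝ) ∂μ) * Real.log 2
            - (∫ ω, ((eAC ω + eBC ω + gABC ω : ℕ) : ℝ) ∂μ) * Real.log 2
            - (∫ ω, (gABC ω : ℝ) ∂μ) * Real.log 2)) ∧
      0 ≤ (∫ ω, (eAB ω : ℝ) ∂μ) * Real.log 2 ∧
      (∫ ω, (gABC ω : ℝ) ∂μ) * Real.log 2 ≤ (2:ℝ)^(NA+NB) / (2:ℝ)^NC ∧
      (∫ ω, (eAB ω : ℝ) ∂μ) ≤ (2:ℝ)^(NA+NB) / (2:ℝ)^NC :=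
  stabilizer_bell_pair_average_general μ eAB eBC eAC gABC sA sB hmAB hmBC hmAC hmg NA NB NC hA hB
    hNC hSC
end
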